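/- arXiv:1507.07370 — 2 statements merged into one kernel-verified Lean document; each statement's English description precedes it below -/
import Mathlib

section
/- Let G_• be a filtration of length d on a nilpotent finite-dimensional real Lie group G, and let Γ ≤ G be a discrete subgroup with G/Γ compact such that G_• is Γ-rational. Then a map f̄ : 𝓕∅ → G/Γ is polynomial (i.e. f̄ = π ∘ f for some f polynomial with respect to G_•, π : G → G/Γ the quotient map) if and only if for every k ≥ 1 and every parallelepiped (α_ω)_{ω ∈ {0,1}^k} in 𝓕∅, the cube (f̄(α_ω))_{ω} lies in the image of HK^k(G_•) under the coordinatewise projection G^{{0,1}^k} → (G/Γ)^{{0,1}^k}. -/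
/-!
Both directions rest on the face decomposition of Host–Kra cubes: `c ∈ HK^{k+1}(G_•)` iff its
lower face `c₀` lies in `HK^k(G_•)` and `c₀⁻¹ c₁` lies in `HK^k(G_{•+1})`, a subgroup normalised by
`HK^k(G_•)`. On a parallelepiped, `c₀⁻¹ c₁` is the cube of the discrete derivative along the last
edge, so induction on `k` shows both that polynomial maps send parallelepipeds to HK cubes and that
maps doing so are polynomial.

To lift `f`, write `f α = π (∏_{β ⊆ α} g β)`, the product taken in colex order, and choose the
Taylor coefficients `g β ∈ G_{|β|}` by recursion. Such ordered products send parallelepipeds to HK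
cubes, each `g β` contributing a face element `(g β)^{[ω]}` with `|ω| ≤ |β|`. On the parallelepiped
spanned by the points of `α`, the cube of `f` differs from the cube of the products of the known
coefficients by an HK cube whose vertices other than the top lie in `Γ`; the top vertex of such a
cube lies in `Γ G_{|α|}`, and as `G_1 = G` makes `G_{|α|}` normal this provides `g α`.
-/

/-- Auxiliary definition of polynomial maps `𝓕∅ → G` with respect to a prefiltration
`G_•` (given as a sequence of subgroups of an ambient group), with recursion depth `n`:
at depth `0` the prefiltration must be trivial and the map constantly `1`; at depth
`n + 1` the map takes values in `G_0` and all its discrete derivatives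
`D_β f (α) = f(α)⁻¹ · f(α ∪ β)` (for `β` non-empty and `α` disjoint from `β`) agree with
maps that are polynomial of depth `n` with respect to the shifted prefiltration `G_{•+1}`. -/
def PolyAux {G : Type*} [Group G] : ℕ → (ℕ → Subgroup G) → (Finset ℕ → G) → Prop
  | 0, Gs, f => Gs 0 = ⊥ ∧ ∀ α : Finset ℕ, f α = 1
  | n + 1, Gs, f => (∀ α : Finset ℕ, f α ∈ Gs 0) ∧
      ∀ β : Finset ℕ, β.Nonempty →
        ∃ Df : Finset ℕ → G, PolyAux n (fun i => Gs (i + 1)) Df ∧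
          ∀ α : Finset ℕ, Disjoint α β → Df α = (f α)⁻¹ * f (α ∪ β)

/-- `f ∈ poly(𝓕∅ → G_•)`: `f` is polynomial with respect to the (terminating)
prefiltration `G_•`. -/
def IsPolySeq {G : Type*} [Group G] (Gs : ℕ → Subgroup G) (f : Finset ℕ → G) : Prop :=
  ∃ n : ℕ, PolyAux n Gs f

/-- `f ∈ poly(𝓕∅ → G_•/Γ)`: `f = π ∘ g` for some `g ∈ poly(𝓕∅ → G_•)`, where
`π : G → G/Γ` is the quotient map. -/
def IsPolyQuot {G : Type*} [Group G] (Gs : ℕ → Subgroup G) (Γ : Subgroup G)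
    (f : Finset ℕ → G ⧸ Γ) : Prop :=
  ∃ g : Finset ℕ → G, IsPolySeq Gs g ∧ ∀ α : Finset ℕ, f α = QuotientGroup.mk (g α)

/-- The number of coordinates of `ω ∈ {0,1}^k` equal to `1`. -/
def cubeWeight {k : ℕ} (ω : Fin k → Bool) : ℕ :=
  (Finset.univ.filter fun i => ω i = true).card

/-- The Host–Kra cube group `HK^k(G_•)`: the subgroup of `G^{{0,1}^k}` generated by the
upper-face elements `g^{[ω]}` (equal to `g` on `{σ : σ ≥ ω}` and `1` elsewhere) with
`g ∈ G_{|ω|}`. -/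
def HKGroup {G : Type*} [Group G] (k : ℕ) (Gs : ℕ → Subgroup G) :
    Subgroup ((Fin k → Bool) → G) :=
  Subgroup.closure {x | ∃ (ω : Fin k → Bool) (g : G), g ∈ Gs (cubeWeight ω) ∧
    x = fun σ => if ∀ i, ω i ≤ σ i then g else 1}

/-- Parallelepipeds in `𝓕∅`: families `(α_ω)_{ω ∈ {0,1}^k}` with
`α_ω = α_0 ∪ ⋃_{i : ω_i = 1} α_i` for pairwise disjoint finite sets `α_0, α_1, …, α_k`. -/
def IsParallelepiped (k : ℕ) (A : (Fin k → Bool) → Finset ℕ) : Prop :=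
  ∃ (a : Finset ℕ) (b : Fin k → Finset ℕ),
    (∀ i, Disjoint a (b i)) ∧ (Pairwise fun i j => Disjoint (b i) (b j)) ∧
    ∀ ω : Fin k → Bool, A ω = a ∪ (Finset.univ.filter fun i => ω i = true).biUnion b

namespace HostKra

open Finset Function
open scoped commutatorElement

variable {G : Type*} [Group G]

structure IsPrefiltration (Gs : ℕ → Subgroup G) : Prop where
  antitone : Antitone Gs
  commutator_le : ∀ i j, ⁅Gs i, Gs j⁆ ≤ Gs (i + j)

def shift (Gs : ℕ → Subgroup G) : ℕ → Subgroup G := fun i => Gs (i + 1)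

theorem IsPrefiltration.shift {Gs : ℕ → Subgroup G} (hG : IsPrefiltration Gs) :
    IsPrefiltration (shift Gs) where
  antitone _ _ hij := hG.antitone (by omega)
  commutator_le i j := (hG.commutator_le (i + 1) (j + 1)).trans (hG.antitone (by omega))

theorem IsPrefiltration.normal {Gs : ℕ → Subgroup G} (hG : IsPrefiltration Gs) (h1 : Gs 1 = ⊤)
    (m : ℕ) : (Gs m).Normal := by
  rw [← Subgroup.commutator_top_left_le_iff, ← h1]
  exact (hG.commutator_le 1 m).trans (hG.antitone (by omega))

variable {k : ℕ}

/-! ### Host–Kra cube groups -/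

/-- `g^{[ω]}`. -/
def faceElem (ω : Fin k → Bool) (g : G) : (Fin k → Bool) → G :=
  fun σ => if ∀ i, ω i ≤ σ i then g else 1

theorem faceElem_inv (ω : Fin k → Bool) (g : G) : (faceElem ω g)⁻¹ = faceElem ω g⁻¹ := by
  ext σ
  simp only [Pi.inv_apply, faceElem]
  split_ifs <;> simp

theorem faceElem_conj (ω τ : Fin k → Bool) (g h : G) :
    faceElem ω g * faceElem τ h * (faceElem ω g)⁻¹ = faceElem (ω ⊔ τ) ⁅g, h⁆ * faceElem τ h := by
  ext σ
  simp only [Pi.mul_apply, Pi.inv_apply, faceElem, Pi.sup_apply, sup_le_iff, forall_and]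
  split_ifs <;> simp_all [commutatorElement_def]

theorem faceElem_snoc_apply_snoc (ω σ : Fin k → Bool) (t s : Bool) (g : G) :
    faceElem (Fin.snoc ω t) g (Fin.snoc σ s) = if t ≤ s then faceElem ω g σ else 1 := by
  simp only [faceElem, Fin.forall_fin_succ', Fin.snoc_castSucc, Fin.snoc_last]
  split_ifs <;> simp_all

theorem cubeWeight_sup_le (ω τ : Fin k → Bool) :
    cubeWeight (ω ⊔ τ) ≤ cubeWeight ω + cubeWeight τ := by
  refine (card_le_card fun i hi => ?_).trans (card_union_le _ _)
  simpa [or_iff_not_imp_left] using hi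

theorem cubeWeight_snoc (ω : Fin k → Bool) (t : Bool) :
    cubeWeight (Fin.snoc ω t : Fin (k + 1) → Bool) = cubeWeight ω + t.toNat := by
  simp only [cubeWeight, card_filter, Fin.sum_univ_castSucc, Fin.snoc_castSucc, Fin.snoc_last]
  cases t <;> rfl

variable (G k) in
def lastFace (t : Bool) : ((Fin (k + 1) → Bool) → G) →* ((Fin k → Bool) → G) :=
  MonoidHom.mk' (fun c σ => c (Fin.snoc σ t)) fun _ _ => rfl

variable (G k) in
def extendConst : ((Fin k → Bool) → G) →* ((Fin (k + 1) → Bool) → G) :=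
  MonoidHom.mk' (fun x σ => x (Fin.init σ)) fun _ _ => rfl

variable (G k) in
def extendUpper : ((Fin k → Bool) → G) →* ((Fin (k + 1) → Bool) → G) :=
  MonoidHom.mk' (fun y σ => if σ (Fin.last k) then y (Fin.init σ) else 1) fun _ _ => by
    ext σ
    simp only [Pi.mul_apply]
    split_ifs <;> simp

@[simp]
theorem lastFace_apply (t : Bool) (c : (Fin (k + 1) → Bool) → G) (σ : Fin k → Bool) :
    lastFace G k t c σ = c (Fin.snoc σ t) := rfl

theorem lastFace_faceElem_snoc (ω : Fin k → Bool) (s t : Bool) (g : G) :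
    lastFace G k t (faceElem (Fin.snoc ω s) g) = if s ≤ t then faceElem ω g else 1 := by
  ext σ
  rw [lastFace_apply, faceElem_snoc_apply_snoc]
  split_ifs <;> rfl

theorem extendConst_faceElem (ω : Fin k → Bool) (g : G) :
    extendConst G k (faceElem ω g) = faceElem (Fin.snoc ω false) g := by
  ext σ
  induction σ using Fin.snocCases with
  | snoc σ t => simp [extendConst, faceElem_snoc_apply_snoc]

theorem extendUpper_faceElem (ω : Fin k → Bool) (g : G) :
    extendUpper G k (faceElem ω g) = faceElem (Fin.snoc ω true) g := by
  ext σ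
  induction σ using Fin.snocCases with
  | snoc σ t => cases t <;> simp [extendUpper, faceElem_snoc_apply_snoc]

theorem eq_extendConst_mul_extendUpper (c : (Fin (k + 1) → Bool) → G) :
    c = extendConst G k (lastFace G k false c) *
      extendUpper G k ((lastFace G k false c)⁻¹ * lastFace G k true c) := by
  ext σ
  induction σ using Fin.snocCases with
  | snoc σ t => cases t <;> simp [extendConst, extendUpper]

variable {Gs : ℕ → Subgroup G}

theorem faceElem_mem_HKGroup {ω : Fin k → Bool} {g : G} (hg : g ∈ Gs (cubeWeight ω)) :
    faceElem ω g ∈ HKGroup k Gs :=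
  Subgroup.subset_closure ⟨ω, g, hg, rfl⟩

theorem faceElem_mem_HKGroup_of_le (ha : Antitone Gs) {ω : Fin k → Bool} {g : G} {m : ℕ}
    (hg : g ∈ Gs m) (hm : cubeWeight ω ≤ m) : faceElem ω g ∈ HKGroup k Gs :=
  faceElem_mem_HKGroup (ha hm hg)

theorem apply_mem_of_mem_HKGroup (ha : Antitone Gs) {c : (Fin k → Bool) → G}
    (hc : c ∈ HKGroup k Gs) (σ : Fin k → Bool) : c σ ∈ Gs 0 := by
  suffices HKGroup k Gs ≤ Subgroup.pi Set.univ fun _ => Gs 0 from this hc σ trivial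
  refine (Subgroup.closure_le _).2 ?_
  rintro _ ⟨ω, g, hg, rfl⟩ τ -
  by_cases h : ∀ i, ω i ≤ τ i
  · simpa [h] using ha (Nat.zero_le _) hg
  · simp [h]

theorem map_extendConst_HKGroup_le : (HKGroup k Gs).map (extendConst G k) ≤ HKGroup (k + 1) Gs := by
  rw [HKGroup, MonoidHom.map_closure, Subgroup.closure_le]
  rintro _ ⟨_, ⟨ω, g, hg, rfl⟩, rfl⟩
  refine extendConst_faceElem ω g ▸ faceElem_mem_HKGroup ?_
  simpa [cubeWeight_snoc] using hg

theorem map_extendUpper_HKGroup_le :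
    (HKGroup k (shift Gs)).map (extendUpper G k) ≤ HKGroup (k + 1) Gs := by
  rw [HKGroup, MonoidHom.map_closure, Subgroup.closure_le]
  rintro _ ⟨_, ⟨ω, g, hg, rfl⟩, rfl⟩
  refine extendUpper_faceElem ω g ▸ faceElem_mem_HKGroup ?_
  simpa [shift, cubeWeight_snoc] using hg

theorem faceElem_conj_mem_HKGroup_shift (hG : IsPrefiltration Gs) {ω : Fin k → Bool} {g : G}
    (hg : g ∈ Gs (cubeWeight ω)) {z : (Fin k → Bool) → G} (hz : z ∈ HKGroup k (shift Gs)) :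
    faceElem ω g * z * (faceElem ω g)⁻¹ ∈ HKGroup k (shift Gs) := by
  suffices (HKGroup k (shift Gs)).map (MulAut.conj (faceElem ω g)).toMonoidHom ≤
      HKGroup k (shift Gs) from this ⟨z, hz, rfl⟩
  rw [HKGroup, MonoidHom.map_closure, Subgroup.closure_le]
  rintro _ ⟨_, ⟨τ, h, hh, rfl⟩, rfl⟩
  change faceElem ω g * faceElem τ h * (faceElem ω g)⁻¹ ∈ _
  rw [faceElem_conj]
  refine mul_mem (faceElem_mem_HKGroup_of_le hG.shift.antitone ?_ (cubeWeight_sup_le ω τ))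
    (faceElem_mem_HKGroup hh)
  have := hG.commutator_le _ _ (Subgroup.commutator_mem_commutator hg hh)
  rwa [← add_assoc] at this

theorem HKGroup_le_normalizer_shift (hG : IsPrefiltration Gs) :
    HKGroup k Gs ≤ Subgroup.normalizer (HKGroup k (shift Gs)) := by
  refine (Subgroup.closure_le _).2 ?_
  rintro _ ⟨ω, g, hg, rfl⟩
  refine Subgroup.mem_normalizer_iff.2 fun z =>
    ⟨faceElem_conj_mem_HKGroup_shift hG hg, fun hz => ?_⟩
  change faceElem ω g * z * (faceElem ω g)⁻¹ ∈ _ at hz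
  have := faceElem_conj_mem_HKGroup_shift hG (inv_mem hg) hz
  rw [← faceElem_inv, inv_inv] at this
  simpa [mul_assoc] using this

theorem lastFace_mem_of_mem_HKGroup_succ (hG : IsPrefiltration Gs)
    {c : (Fin (k + 1) → Bool) → G} (hc : c ∈ HKGroup (k + 1) Gs) :
    lastFace G k false c ∈ HKGroup k Gs ∧
      (lastFace G k false c)⁻¹ * lastFace G k true c ∈ HKGroup k (shift Gs) := by
  have hN := HKGroup_le_normalizer_shift (k := k) hG
  induction hc using Subgroup.closure_induction with
  | mem _ hx =>
    obtain ⟨ω, g, hg, rfl⟩ := hx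
    induction ω using Fin.snocCases with
    | snoc ω s =>
      change lastFace G k false (faceElem (Fin.snoc ω s) g) ∈ _ ∧
        (lastFace G k false (faceElem (Fin.snoc ω s) g))⁻¹ *
          lastFace G k true (faceElem (Fin.snoc ω s) g) ∈ _
      rw [cubeWeight_snoc] at hg
      cases s
      · simpa [lastFace_faceElem_snoc] using faceElem_mem_HKGroup hg
      · have : ¬true ≤ false := by decide
        simpa [lastFace_faceElem_snoc, this] using faceElem_mem_HKGroup (Gs := shift Gs) hg
  | one => simp
  | mul u v _ _ hu hv =>
    refine ⟨by simpa using mul_mem hu.1 hv.1, ?_⟩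
    have hconj := (Subgroup.mem_normalizer_iff.1 (hN (inv_mem hv.1)) _).1 hu.2
    have := mul_mem hconj hv.2
    simpa [mul_assoc] using this
  | inv u _ hu =>
    refine ⟨by simpa using inv_mem hu.1, ?_⟩
    have := (Subgroup.mem_normalizer_iff.1 (hN hu.1) _).1 (inv_mem hu.2)
    simpa [mul_assoc] using this

theorem mem_HKGroup_succ_iff (hG : IsPrefiltration Gs) {c : (Fin (k + 1) → Bool) → G} :
    c ∈ HKGroup (k + 1) Gs ↔ lastFace G k false c ∈ HKGroup k Gs ∧
      (lastFace G k false c)⁻¹ * lastFace G k true c ∈ HKGroup k (shift Gs) := by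
  refine ⟨lastFace_mem_of_mem_HKGroup_succ hG, fun ⟨h0, h1⟩ => ?_⟩
  rw [eq_extendConst_mul_extendUpper c]
  exact mul_mem (map_extendConst_HKGroup_le ⟨_, h0, rfl⟩) (map_extendUpper_HKGroup_le ⟨_, h1, rfl⟩)

theorem snoc_eq_top_iff {σ : Fin k → Bool} {t : Bool} :
    (Fin.snoc σ t : Fin (k + 1) → Bool) = ⊤ ↔ σ = ⊤ ∧ t = true := by
  have htop : (Fin.snoc (⊤ : Fin k → Bool) true : Fin (k + 1) → Bool) = ⊤ := by
    ext i
    induction i using Fin.lastCases <;> simp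
  rw [← htop, Fin.snoc_inj]

theorem exists_top_eq_mul_of_mem_HKGroup (hG : IsPrefiltration Gs) (Γ : Subgroup G)
    {y : (Fin k → Bool) → G} (hy : y ∈ HKGroup k Gs) (hΓ : ∀ σ, σ ≠ ⊤ → y σ ∈ Γ) :
    ∃ γ ∈ Γ, ∃ s ∈ Gs k, y ⊤ = γ * s := by
  induction k generalizing Gs with
  | zero => exact ⟨1, one_mem _, y ⊤, apply_mem_of_mem_HKGroup hG.antitone hy ⊤, (one_mul _).symm⟩
  | succ k ih =>
    obtain ⟨-, hz⟩ := (mem_HKGroup_succ_iff hG).1 hy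
    have hbot : ∀ σ, y (Fin.snoc σ false) ∈ Γ := fun σ => hΓ _ (by simp [snoc_eq_top_iff])
    obtain ⟨γ, hγ, s, hs, hzs⟩ := ih hG.shift hz fun σ hσ =>
      mul_mem (inv_mem (hbot σ)) (hΓ _ (by simp [snoc_eq_top_iff, hσ]))
    refine ⟨y (Fin.snoc ⊤ false) * γ, mul_mem (hbot ⊤) hγ, s, hs, ?_⟩
    have htop : (Fin.snoc (⊤ : Fin k → Bool) true : Fin (k + 1) → Bool) = ⊤ := by
      simp [snoc_eq_top_iff]
    simp only [Pi.mul_apply, Pi.inv_apply, lastFace_apply, htop] at hzs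
    rw [mul_assoc, ← hzs, mul_inv_cancel_left]

/-! ### Parallelepipeds and polynomial maps -/

def paraCube (a : Finset ℕ) (b : Fin k → Finset ℕ) (σ : Fin k → Bool) : Finset ℕ :=
  a ∪ (univ.filter fun i => σ i = true).biUnion b

theorem paraCube_snoc (a : Finset ℕ) (b : Fin (k + 1) → Finset ℕ) (σ : Fin k → Bool) (t : Bool) :
    paraCube a b (Fin.snoc σ t) =
      paraCube a (Fin.init b) σ ∪ (if t then b (Fin.last k) else ∅) := by
  ext x
  cases t <;> simp [paraCube, Fin.exists_fin_succ', Fin.init]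

theorem paraCube_mono (a : Finset ℕ) (b : Fin k → Finset ℕ) : Monotone (paraCube a b) := by
  intro σ τ hστ
  refine union_subset_union_right (biUnion_subset_biUnion_of_subset_left _ fun i hi => ?_)
  have := hστ i
  simp only [mem_filter, mem_univ, true_and] at hi ⊢
  exact le_antisymm (Bool.le_true _) (hi ▸ this)

theorem paraCube_sdiff (a β : Finset ℕ) (b : Fin k → Finset ℕ) (σ : Fin k → Bool) :
    paraCube (a \ β) (fun i => b i \ β) σ = paraCube a b σ \ β := by
  ext x
  simp only [paraCube, mem_union, mem_sdiff, mem_biUnion, mem_filter]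
  tauto

theorem disjoint_paraCube_last {a : Finset ℕ} {b : Fin (k + 1) → Finset ℕ}
    (hab : ∀ i, Disjoint a (b i)) (hb : Pairwise (Disjoint on b)) (σ : Fin k → Bool) :
    Disjoint (paraCube a (Fin.init b) σ) (b (Fin.last k)) := by
  refine disjoint_union_left.2 ⟨hab _, (disjoint_biUnion_left _ _ _).2 fun i _ => hb ?_⟩
  exact (Fin.castSucc_lt_last i).ne

theorem pairwise_disjoint_snoc {b : Fin k → Finset ℕ} {c : Finset ℕ}
    (hb : Pairwise (Disjoint on b)) (hc : ∀ i, Disjoint (b i) c) :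
    Pairwise (Disjoint on (Fin.snoc b c : Fin (k + 1) → Finset ℕ)) := by
  intro i j hij
  induction i using Fin.lastCases <;> induction j using Fin.lastCases
  · exact absurd rfl hij
  · simpa [onFun] using (hc _).symm
  · simpa [onFun] using hc _
  · simpa [onFun] using hb (ne_of_apply_ne _ hij)

def HasHKCubes (Gs : ℕ → Subgroup G) (F : Finset ℕ → G) : Prop :=
  ∀ (k : ℕ) (a : Finset ℕ) (b : Fin k → Finset ℕ), (∀ i, Disjoint a (b i)) →
    Pairwise (Disjoint on b) → (fun σ => F (paraCube a b σ)) ∈ HKGroup k Gs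

theorem mem_HKGroup_zero {c : (Fin 0 → Bool) → G} (hc : c ⊤ ∈ Gs 0) : c ∈ HKGroup 0 Gs := by
  have : c = faceElem ⊤ (c ⊤) := by
    ext σ
    simp [faceElem, Subsingleton.elim σ ⊤]
  rw [this]
  exact faceElem_mem_HKGroup (by simpa [cubeWeight] using hc)

theorem _root_.PolyAux.apply_mem {n : ℕ} {f : Finset ℕ → G} (hf : PolyAux n Gs f) (α : Finset ℕ) :
    f α ∈ Gs 0 := by
  cases n with
  | zero => simp [hf.2 α]
  | succ n => exact hf.1 α

theorem _root_.IsPolySeq.exists_deriv (ha : Antitone Gs) {f : Finset ℕ → G} (hf : IsPolySeq Gs f)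
    {β : Finset ℕ} (hβ : β.Nonempty) :
    ∃ Df : Finset ℕ → G, IsPolySeq (shift Gs) Df ∧
      ∀ α, Disjoint α β → Df α = (f α)⁻¹ * f (α ∪ β) := by
  obtain ⟨n, hn⟩ := hf
  cases n with
  | zero =>
    refine ⟨1, ⟨0, le_bot_iff.1 (hn.1 ▸ ha (Nat.zero_le 1)), fun _ => rfl⟩, fun α _ => ?_⟩
    simp [hn.2]
  | succ n =>
    obtain ⟨Df, hDf, heq⟩ := hn.2 β hβ
    exact ⟨Df, ⟨n, hDf⟩, heq⟩

theorem _root_.IsPolySeq.hasHKCubes (hG : IsPrefiltration Gs) {f : Finset ℕ → G}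
    (hf : IsPolySeq Gs f) : HasHKCubes Gs f := by
  unfold HasHKCubes
  intro k
  induction k generalizing Gs f with
  | zero =>
    obtain ⟨n, hn⟩ := hf
    exact fun a b _ _ => mem_HKGroup_zero (hn.apply_mem _)
  | succ k ih =>
    intro a b hab hb
    have hab' : ∀ i, Disjoint a (Fin.init b i) := fun i => hab _
    have hb' : Pairwise (Disjoint on Fin.init b) := fun i j hij =>
      hb (Fin.castSucc_injective k |>.ne hij)
    refine (mem_HKGroup_succ_iff hG).2 ⟨?_, ?_⟩
    · convert ih hG hf a (Fin.init b) hab' hb' using 1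
      ext σ
      simp [paraCube_snoc]
    · rcases (b (Fin.last k)).eq_empty_or_nonempty with hlast | hlast
      · convert one_mem (HKGroup k (shift Gs))
        ext σ
        simp [paraCube_snoc, hlast]
      obtain ⟨Df, hDf, heq⟩ := hf.exists_deriv hG.antitone hlast
      convert ih hG.shift hDf a (Fin.init b) hab' hb' using 1
      ext σ
      simp [paraCube_snoc, heq _ (disjoint_paraCube_last hab hb σ)]

theorem HasHKCubes.apply_mem (ha : Antitone Gs) {F : Finset ℕ → G} (hF : HasHKCubes Gs F)
    (α : Finset ℕ) : F α ∈ Gs 0 := by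
  have := hF 0 α Fin.elim0 (fun i => i.elim0) fun i => i.elim0
  simpa [paraCube] using apply_mem_of_mem_HKGroup ha this ⊤

theorem HasHKCubes.deriv (hG : IsPrefiltration Gs) {F : Finset ℕ → G} (hF : HasHKCubes Gs F)
    (β : Finset ℕ) : HasHKCubes (shift Gs) fun α => (F (α \ β))⁻¹ * F (α ∪ β) := by
  intro k a b hab hb
  let b' : Fin (k + 1) → Finset ℕ := Fin.snoc (fun i => b i \ β) β
  have hab' : ∀ i, Disjoint (a \ β) (b' i) := by
    refine Fin.lastCases (by simp [b', sdiff_disjoint]) fun i => ?_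
    simpa [b'] using (hab i).mono sdiff_subset sdiff_subset
  have hb' : Pairwise (Disjoint on b') := pairwise_disjoint_snoc
    (fun i j hij => (hb hij).mono sdiff_subset sdiff_subset) fun _ => sdiff_disjoint
  -- the derivative cube is the lower-to-upper quotient of a `(k + 1)`-cube with last edge `β`
  convert ((mem_HKGroup_succ_iff hG).1 (hF (k + 1) (a \ β) b' hab' hb')).2 using 1
  ext σ
  simp [paraCube_snoc, b', paraCube_sdiff]

theorem HasHKCubes.polyAux (hG : IsPrefiltration Gs) {F : Finset ℕ → G} (hF : HasHKCubes Gs F)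
    {n : ℕ} (hn : Gs n = ⊥) : PolyAux n Gs F := by
  induction n generalizing Gs F with
  | zero => exact ⟨hn, fun α => by simpa [hn] using hF.apply_mem hG.antitone α⟩
  | succ n ih =>
    refine ⟨hF.apply_mem hG.antitone, fun β _ => ⟨_, ih hG.shift (hF.deriv hG β) hn, fun α hα => ?_⟩⟩
    simp [sdiff_eq_self_of_disjoint hα]

/-! ### Taylor products -/

theorem equivBitIndices_symm_le_of_subset {s t : Finset ℕ} (h : s ⊆ t) :
    equivBitIndices.symm s ≤ equivBitIndices.symm t :=
  (geomSum_le_geomSum_iff_toColex_le_toColex le_rfl).2 (Colex.toColex_le_toColex_of_subset h)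

/-- Products run along the enumeration `equivBitIndices` of `Finset ℕ`, which is colex order and
hence extends inclusion. -/
def subsetProd (g : Finset ℕ → G) (α : Finset ℕ) (N : ℕ) : G :=
  ((List.range N).map fun n => if equivBitIndices n ⊆ α then g (equivBitIndices n) else 1).prod

def taylorProd (g : Finset ℕ → G) (α : Finset ℕ) : G :=
  subsetProd g α (equivBitIndices.symm α + 1)

theorem subsetProd_succ (g : Finset ℕ → G) (α : Finset ℕ) (N : ℕ) :
    subsetProd g α (N + 1) =
      subsetProd g α N * if equivBitIndices N ⊆ α then g (equivBitIndices N) else 1 := by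
  simp [subsetProd, List.range_succ]

theorem subsetProd_eq_taylorProd (g : Finset ℕ → G) {α : Finset ℕ} {N : ℕ}
    (hN : equivBitIndices.symm α < N) : subsetProd g α N = taylorProd g α := by
  induction N, hN using Nat.le_induction with
  | base => rfl
  | succ N hN ih =>
    rw [subsetProd_succ, ih, if_neg, mul_one]
    intro h
    have := equivBitIndices_symm_le_of_subset h
    simp only [Equiv.symm_apply_apply] at this
    omega

theorem taylorProd_eq_mul (g : Finset ℕ → G) (α : Finset ℕ) :
    taylorProd g α = subsetProd g α (equivBitIndices.symm α) * g α := by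
  simp [taylorProd, subsetProd_succ]

theorem subsetProd_congr {g g' : Finset ℕ → G} {α : Finset ℕ} {N : ℕ}
    (h : ∀ β ⊆ α, equivBitIndices.symm β < N → g β = g' β) :
    subsetProd g α N = subsetProd g' α N := by
  refine congrArg List.prod (List.map_congr_left fun n hn => ?_)
  split_ifs with hn'
  · exact h _ hn' (by simpa using hn)
  · rfl

theorem taylorProd_congr {g g' : Finset ℕ → G} {α : Finset ℕ} (h : ∀ β ⊆ α, g β = g' β) :
    taylorProd g α = taylorProd g' α :=
  subsetProd_congr fun β hβ _ => h β hβ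

def meetPattern (b : Fin k → Finset ℕ) (β : Finset ℕ) : Fin k → Bool :=
  fun i => decide (¬Disjoint β (b i))

theorem cubeWeight_meetPattern_le {b : Fin k → Finset ℕ} (hb : Pairwise (Disjoint on b))
    (β : Finset ℕ) : cubeWeight (meetPattern b β) ≤ β.card := by
  refine (card_le_card_biUnion (f := fun i => β ∩ b i) ?_ ?_).trans
    (card_le_card (biUnion_subset.2 fun i _ => inter_subset_left))
  · exact fun i _ j _ hij => (hb hij).mono inter_subset_right inter_subset_right
  · intro i hi
    simpa [meetPattern, not_disjoint_iff_nonempty_inter] using hi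

theorem meetPattern_le_iff {a : Finset ℕ} {b : Fin k → Finset ℕ} (hab : ∀ i, Disjoint a (b i))
    (hb : Pairwise (Disjoint on b)) {β : Finset ℕ} (hβ : β ⊆ paraCube a b ⊤) (σ : Fin k → Bool) :
    (∀ i, meetPattern b β i ≤ σ i) ↔ β ⊆ paraCube a b σ := by
  have hle : ∀ i, meetPattern b β i ≤ σ i ↔ (¬Disjoint β (b i) → σ i = true) := fun i => by
    by_cases h : Disjoint β (b i) <;> cases σ i <;> simp [meetPattern, h]
  simp only [hle]
  constructor
  · intro h x hx
    obtain hxa | ⟨i, hxi⟩ := by simpa [paraCube] using hβ hx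
    · exact mem_union_left _ hxa
    · have := h i (not_disjoint_iff.2 ⟨x, hx, hxi⟩)
      exact mem_union_right _ (mem_biUnion.2 ⟨i, by simpa using this, hxi⟩)
  · intro h i hi
    obtain ⟨x, hx, hxi⟩ := not_disjoint_iff.1 hi
    obtain hxa | ⟨j, hj, hxj⟩ := by simpa [paraCube] using h hx
    · exact absurd hxi (disjoint_left.1 (hab i) hxa)
    · obtain rfl : j = i := by_contra fun hji => disjoint_left.1 (hb hji) hxj hxi
      exact hj

theorem taylorProd_paraCube (g : Finset ℕ → G) {a : Finset ℕ} {b : Fin k → Finset ℕ}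
    (hab : ∀ i, Disjoint a (b i)) (hb : Pairwise (Disjoint on b)) :
    (fun σ => taylorProd g (paraCube a b σ)) =
      ((List.range (equivBitIndices.symm (paraCube a b ⊤) + 1)).map fun n =>
        faceElem (meetPattern b (equivBitIndices n))
          (if equivBitIndices n ⊆ paraCube a b ⊤ then g (equivBitIndices n) else 1)).prod := by
  ext σ
  have hσ : paraCube a b σ ⊆ paraCube a b ⊤ := paraCube_mono a b le_top
  rw [← subsetProd_eq_taylorProd g (Nat.lt_succ_of_le (equivBitIndices_symm_le_of_subset hσ)),
    Pi.list_prod_apply, List.map_map, subsetProd]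
  refine congrArg List.prod (List.map_congr_left fun n _ => ?_)
  by_cases hβ : equivBitIndices n ⊆ paraCube a b ⊤
  · simp only [comp_apply, faceElem, meetPattern_le_iff hab hb hβ, hβ, if_true]
  · have : ¬equivBitIndices n ⊆ paraCube a b σ := fun h => hβ (h.trans hσ)
    simp only [comp_apply, faceElem, this, hβ, if_false, ite_self]

theorem hasHKCubes_taylorProd (ha : Antitone Gs) {g : Finset ℕ → G}
    (hg : ∀ β, g β ∈ Gs β.card) : HasHKCubes Gs (taylorProd g) := by
  intro k a b hab hb
  rw [taylorProd_paraCube g hab hb]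
  refine list_prod_mem fun x hx => ?_
  obtain ⟨n, -, rfl⟩ := List.mem_map.1 hx
  refine faceElem_mem_HKGroup_of_le ha ?_ (cubeWeight_meetPattern_le hb _)
  split_ifs
  · exact hg _
  · exact one_mem _

/-! ### Lifting maps to `G ⧸ Γ` -/

theorem exists_paraCube_top_eq_and_ssubset (α : Finset ℕ) :
    ∃ b : Fin α.card → Finset ℕ, Pairwise (Disjoint on b) ∧ paraCube ∅ b ⊤ = α ∧
      ∀ σ, σ ≠ ⊤ → paraCube ∅ b σ ⊂ α := by
  let e := α.equivFin.symm
  have hmem : ∀ σ x, x ∈ paraCube ∅ (fun i => {(e i : ℕ)}) σ ↔ ∃ i, σ i = true ∧ x = e i := by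
    simp [paraCube]
  have hsub : ∀ σ, paraCube ∅ (fun i => {(e i : ℕ)}) σ ⊆ α := fun σ x hx => by
    obtain ⟨i, -, rfl⟩ := (hmem σ x).1 hx
    exact (e i).2
  refine ⟨fun i => {(e i : ℕ)}, fun i j hij => ?_, (hsub ⊤).antisymm fun x hx => ?_,
    fun σ hσ => (hsub σ).ssubset_of_not_subset fun h => hσ ?_⟩
  · simpa [onFun] using fun h => hij (e.injective (Subtype.ext h))
  · exact (hmem ⊤ x).2 ⟨e.symm ⟨x, hx⟩, rfl, by simp⟩
  · ext i
    obtain ⟨j, hj, hij⟩ := (hmem σ _).1 (h (e i).2)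
    rw [e.injective (Subtype.ext hij)]
    exact hj

def HasHKCubesModulo (Gs : ℕ → Subgroup G) (Γ : Subgroup G) (f : Finset ℕ → G ⧸ Γ) : Prop :=
  ∀ (k : ℕ) (a : Finset ℕ) (b : Fin k → Finset ℕ), (∀ i, Disjoint a (b i)) →
    Pairwise (Disjoint on b) → ∃ c ∈ HKGroup k Gs, ∀ σ, f (paraCube a b σ) = c σ

theorem hasHKCubesModulo_of_isParallelepiped (hG : IsPrefiltration Gs) {Γ : Subgroup G}
    {f : Finset ℕ → G ⧸ Γ}
    (hf : ∀ k : ℕ, 1 ≤ k → ∀ A : (Fin k → Bool) → Finset ℕ, IsParallelepiped k A →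
      ∃ c ∈ HKGroup k Gs, ∀ ω : Fin k → Bool, f (A ω) = QuotientGroup.mk (c ω)) :
    HasHKCubesModulo Gs Γ f := by
  intro k a b hab hb
  obtain ⟨c, hc, hfc⟩ := hf (k + 1) (Nat.le_add_left 1 k) (paraCube a (Fin.snoc b ∅))
    ⟨a, Fin.snoc b ∅, Fin.forall_fin_succ'.2 ⟨by simpa using hab, by simp⟩,
      pairwise_disjoint_snoc hb fun _ => disjoint_empty_right _, fun _ => rfl⟩
  refine ⟨_, ((mem_HKGroup_succ_iff hG).1 hc).1, fun σ => ?_⟩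
  have := hfc (Fin.snoc σ false)
  rwa [paraCube_snoc, Fin.init_snoc, if_neg Bool.false_ne_true, union_empty] at this

theorem exists_taylorCoeff (hG : IsPrefiltration Gs) (h1 : Gs 1 = ⊤) {Γ : Subgroup G}
    {f : Finset ℕ → G ⧸ Γ} (hf : HasHKCubesModulo Gs Γ f) {g : Finset ℕ → G} {α : Finset ℕ}
    (hg : ∀ β ⊂ α, g β ∈ Gs β.card ∧ f β = taylorProd g β) :
    ∃ t ∈ Gs α.card, f α = (subsetProd g α (equivBitIndices.symm α) * t : G) := by
  obtain ⟨b, hb, htop, hssub⟩ := exists_paraCube_top_eq_and_ssubset α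
  obtain ⟨c, hc, hfc⟩ := hf _ ∅ b (fun _ => disjoint_empty_left _) hb
  -- the known coefficients, with the one of `α` still to be found set to `1`
  let g' : Finset ℕ → G := fun β => if β ⊂ α then g β else 1
  have hg' : ∀ β, g' β ∈ Gs β.card := fun β => by
    by_cases hβ : β ⊂ α <;> simp [g', hβ, (hg β _).1]
  let X := fun σ => taylorProd g' (paraCube ∅ b σ)
  have hX : X ∈ HKGroup α.card Gs :=
    hasHKCubes_taylorProd hG.antitone hg' _ ∅ b (fun _ => disjoint_empty_left _) hb
  have hXΓ : ∀ σ, σ ≠ ⊤ → (X⁻¹ * c) σ ∈ Γ := fun σ hσ => by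
    have hXσ : X σ = taylorProd g (paraCube ∅ b σ) :=
      taylorProd_congr fun β hβ => if_pos ((hβ.trans_ssubset (hssub σ hσ)))
    rw [Pi.mul_apply, Pi.inv_apply, hXσ, ← QuotientGroup.eq, ← (hg _ (hssub σ hσ)).2, hfc]
  obtain ⟨γ, hγ, s, hs, hγs⟩ := exists_top_eq_mul_of_mem_HKGroup hG Γ (mul_mem (inv_mem hX) hc) hXΓ
  have hXtop : X ⊤ = subsetProd g α (equivBitIndices.symm α) := by
    simp only [X, htop, taylorProd_eq_mul, g', lt_irrefl, if_false, mul_one]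
    refine subsetProd_congr fun β hβα hβ => if_pos (hβα.ssubset_of_ne ?_)
    rintro rfl
    exact lt_irrefl _ hβ
  refine ⟨γ * s * γ⁻¹, (hG.normal h1 α.card).conj_mem s hs γ, ?_⟩
  have hctop : c ⊤ = X ⊤ * (γ * s * γ⁻¹) * γ := by
    rw [Pi.mul_apply, Pi.inv_apply, inv_mul_eq_iff_eq_mul] at hγs
    rw [hγs]
    group
  rw [← htop, hfc, hctop, QuotientGroup.mk_mul_of_mem _ hγ, hXtop, htop]

noncomputable def taylorCoeff (Gs : ℕ → Subgroup G) (Γ : Subgroup G) (f : Finset ℕ → G ⧸ Γ)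
    (α : Finset ℕ) : G :=
  open Classical in
  if h : ∃ t ∈ Gs α.card, f α =
      (((List.finRange (equivBitIndices.symm α)).map fun m : Fin _ =>
        if equivBitIndices m ⊆ α then taylorCoeff Gs Γ f (equivBitIndices m) else 1).prod * t : G)
  then h.choose else 1
termination_by equivBitIndices.symm α
decreasing_by all_goals simp only [Equiv.symm_apply_apply, Fin.is_lt]

theorem taylorCoeff_spec (hG : IsPrefiltration Gs) (h1 : Gs 1 = ⊤) {Γ : Subgroup G}
    {f : Finset ℕ → G ⧸ Γ} (hf : HasHKCubesModulo Gs Γ f) (α : Finset ℕ) :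
    taylorCoeff Gs Γ f α ∈ Gs α.card ∧ f α = taylorProd (taylorCoeff Gs Γ f) α := by
  induction α using Finset.strongInduction with
  | H α ih =>
  have hprod : ((List.finRange (equivBitIndices.symm α)).map fun m : Fin _ =>
      if equivBitIndices m ⊆ α then taylorCoeff Gs Γ f (equivBitIndices m) else 1).prod =
      subsetProd (taylorCoeff Gs Γ f) α (equivBitIndices.symm α) := by
    rw [subsetProd, ← List.map_coe_finRange_eq_range, List.map_map]
    rfl
  have h := exists_taylorCoeff hG h1 hf ih
  rw [← hprod] at h
  rw [taylorCoeff, dif_pos h, taylorProd_eq_mul, ← hprod, taylorCoeff, dif_pos h]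
  exact h.choose_spec

end HostKra

variable {E : Type*} [NormedAddCommGroup E] [NormedSpace ℝ E] [FiniteDimensional ℝ E]
  {G : Type*} [TopologicalSpace G] [ChartedSpace E G] [Group G] [IsTopologicalGroup G]
  [LieGroup (modelWithCornersSelf ℝ E) (⊤ : ℕ∞) G] [Group.IsNilpotent G]

theorem statement6_general
    (d : ℕ) (Gs : ℕ → Subgroup G)
    (hanti : Antitone Gs)
    (hcomm : ∀ i j, ⁅Gs i, Gs j⁆ ≤ Gs (i + j))
    (hfil1 : Gs 1 = ⊤) (hlen : Gs (d + 1) = ⊥)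
    (Γ : Subgroup G)
    (f : Finset ℕ → G ⧸ Γ) :
    IsPolyQuot Gs Γ f ↔
      ∀ k : ℕ, 1 ≤ k → ∀ A : (Fin k → Bool) → Finset ℕ, IsParallelepiped k A →
        ∃ c ∈ HKGroup k Gs, ∀ ω : Fin k → Bool, f (A ω) = QuotientGroup.mk (c ω) := by
  have hG : HostKra.IsPrefiltration Gs := ⟨hanti, hcomm⟩
  constructor
  · rintro ⟨g, hg, hgf⟩ k - A ⟨a, b, hab, hb, hA⟩
    exact ⟨_, hg.hasHKCubes hG k a b hab hb, fun ω => by rw [hA, hgf]; rfl⟩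
  · intro hf
    have hspec :=
      HostKra.taylorCoeff_spec hG hfil1 (HostKra.hasHKCubesModulo_of_isParallelepiped hG hf)
    refine ⟨HostKra.taylorProd (HostKra.taylorCoeff Gs Γ f), ⟨d + 1, ?_⟩, fun α => (hspec α).2⟩
    exact (HostKra.hasHKCubes_taylorProd hanti fun β => (hspec β).1).polyAux hG hlen

/-- With `G_•` a `Γ`-rational filtration of length `d` as above, a map
`f : 𝓕∅ → G/Γ` is polynomial iff for every `k ≥ 1` and every parallelepiped
`(α_ω)_{ω ∈ {0,1}^k}`, the cube `(f(α_ω))_ω` lies in the image of `HK^k(G_•)` under the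
coordinatewise projection `G^{{0,1}^k} → (G/Γ)^{{0,1}^k}`. -/
theorem statement6
    (d : ℕ) (Gs : ℕ → Subgroup G)
    (hanti : Antitone Gs) (hclosed : ∀ i, IsClosed (Gs i : Set G))
    (hcomm : ∀ i j, ⁅Gs i, Gs j⁆ ≤ Gs (i + j))
    (hfil0 : Gs 0 = ⊤) (hfil1 : Gs 1 = ⊤) (hlen : Gs (d + 1) = ⊥)
    (Γ : Subgroup G) [DiscreteTopology Γ] (hcocompact : CompactSpace (G ⧸ Γ))
    (hrat : ∀ i, CompactSpace (↥(Gs i) ⧸ Γ.subgroupOf (Gs i)))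
    (f : Finset ℕ → G ⧸ Γ) :
    IsPolyQuot Gs Γ f ↔
      ∀ k : ℕ, 1 ≤ k → ∀ A : (Fin k → Bool) → Finset ℕ, IsParallelepiped k A →
        ∃ c ∈ HKGroup k Gs, ∀ ω : Fin k → Bool, f (A ω) = QuotientGroup.mk (c ω) :=
  statement6_general d Gs hanti hcomm hfil1 hlen Γ f
end

section
/- Let G_• be a filtration of length d on a nilpotent finite-dimensional real Lie group G, and let Γ ≤ G be a discrete subgroup with G/Γ compact such that G_• is Γ-rational. Suppose (g_ω)_{ω ∈ {0,1}^{d+1}} ∈ HK^{d+1}(G_•) is such that g_ω ∈ Γ for every ω ≠ 1^{d+1}. Then also g_{1^{d+1}} ∈ Γ. -/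
/-!
Split a cube `c ∈ HK^{k+1}(G_•)` along its first coordinate into the lower face `c₀` and the
upper face `c₁`. Then `c₀ ∈ HK^k(G_•)` and `c₀⁻¹ c₁ ∈ HK^k(G_{•+1})`: this is checked on the
generators, and it survives products because `HK^k(G_•)` normalizes `HK^k(G_{•+1})`, a
consequence of `[g^{[ω]}, h^{[τ]}] = [g, h]^{[ω ⊔ τ]}` and `|ω ⊔ τ| ≤ |ω| + |τ|`. If all
vertices but `1^{k+1}` lie in `Γ`, so do all vertices of `c₀⁻¹ c₁` but `1^k`, and induction on
`k` (shifting the filtration each time) ends at `k = 0`, where the single vertex lies in the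
shifted `G_0`, that is, in `G_{d+1} = 1`.
-/

section HostKraCube

open scoped commutatorElement

variable {H : Type*} [Group H]

/-- The termination condition `G_{d+1} = 1` of a prefiltration is not built in. -/
structure IsPrefiltration (Gs : ℕ → Subgroup H) : Prop where
  antitone : Antitone Gs
  commutator_le : ∀ i j, ⁅Gs i, Gs j⁆ ≤ Gs (i + j)

theorem IsPrefiltration.shift {Gs : ℕ → Subgroup H} (hGs : IsPrefiltration Gs) :
    IsPrefiltration fun i => Gs (i + 1) where
  antitone _ _ hij := hGs.antitone (Nat.succ_le_succ hij)
  commutator_le i j := (hGs.commutator_le _ _).trans (hGs.antitone (by omega))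

variable {k : ℕ}

theorem cubeWeight_sup_le (ω τ : Fin k → Bool) :
    cubeWeight (ω ⊔ τ) ≤ cubeWeight ω + cubeWeight τ := by
  unfold cubeWeight
  calc _ = (Finset.univ.filter fun i => ω i = true ∨ τ i = true).card := by simp
    _ ≤ _ := by rw [Finset.filter_or]; exact Finset.card_union_le _ _

theorem cubeWeight_cons (b : Bool) (ω : Fin k → Bool) :
    cubeWeight (Fin.cons b ω : Fin (k + 1) → Bool) = cubeWeight ω + b.toNat := by
  simp only [cubeWeight, Finset.card_filter, Fin.sum_univ_succ, Fin.cons_zero, Fin.cons_succ]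
  cases b <;> simp [add_comm]

/-- The upper-face element `g^{[ω]}`. -/
def cubeFace (ω : Fin k → Bool) (g : H) : (Fin k → Bool) → H :=
  fun σ => if ∀ i, ω i ≤ σ i then g else 1

theorem cubeFace_inv (ω : Fin k → Bool) (g : H) : (cubeFace ω g)⁻¹ = cubeFace ω g⁻¹ := by
  funext σ
  by_cases hω : ∀ i, ω i ≤ σ i <;> simp [cubeFace, hω]

theorem cubeFace_commutator (ω τ : Fin k → Bool) (g h : H) :
    ⁅cubeFace ω g, cubeFace τ h⁆ = cubeFace (ω ⊔ τ) ⁅g, h⁆ := by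
  funext σ
  simp only [cubeFace, commutatorElement_def, Pi.mul_apply, Pi.inv_apply, Pi.sup_apply,
    sup_le_iff, forall_and]
  by_cases hω : ∀ i, ω i ≤ σ i <;> by_cases hτ : ∀ i, τ i ≤ σ i <;> simp [hω, hτ]

variable {Gs : ℕ → Subgroup H}

theorem cubeFace_mem_HKGroup {ω : Fin k → Bool} {g : H} (hg : g ∈ Gs (cubeWeight ω)) :
    cubeFace ω g ∈ HKGroup k Gs :=
  Subgroup.subset_closure ⟨ω, g, hg, rfl⟩

@[elab_as_elim]
theorem HKGroup_induction {p : ((Fin k → Bool) → H) → Prop}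
    (face : ∀ ω g, g ∈ Gs (cubeWeight ω) → p (cubeFace ω g)) (one : p 1)
    (mul : ∀ x y, x ∈ HKGroup k Gs → y ∈ HKGroup k Gs → p x → p y → p (x * y))
    (inv : ∀ x, x ∈ HKGroup k Gs → p x → p x⁻¹) {c : (Fin k → Bool) → H}
    (hc : c ∈ HKGroup k Gs) : p c := by
  induction hc using Subgroup.closure_induction with
  | mem _ hx => obtain ⟨ω, g, hg, rfl⟩ := hx; exact face ω g hg
  | one => exact one
  | mul x y hx hy px py => exact mul x y hx hy px py
  | inv x hx px => exact inv x hx px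

theorem HKGroup_le {K : Subgroup ((Fin k → Bool) → H)}
    (hK : ∀ ω g, g ∈ Gs (cubeWeight ω) → cubeFace ω g ∈ K) : HKGroup k Gs ≤ K :=
  fun _ hc => HKGroup_induction hK K.one_mem (fun _ _ _ _ => K.mul_mem)
    (fun _ _ => K.inv_mem) hc

theorem HKGroup_apply_mem (hGs : Antitone Gs) {c : (Fin k → Bool) → H}
    (hc : c ∈ HKGroup k Gs) (σ : Fin k → Bool) : c σ ∈ Gs 0 := by
  refine HKGroup_le (K := (Gs 0).comap (Pi.evalMonoidHom _ σ)) (fun ω g hg => ?_) hc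
  by_cases hω : ∀ i, ω i ≤ σ i
  · simpa [cubeFace, hω] using hGs (Nat.zero_le _) hg
  · simp [cubeFace, hω]

/-- Conjugating by `g^{[ω]}` multiplies `h^{[τ]}` by the commutator `[g, h]^{[ω ⊔ τ]}`, which
lies one step deeper in the filtration because `|ω ⊔ τ| ≤ |ω| + |τ|`. -/
theorem cubeFace_conj_mem_HKGroup_shift (hGs : IsPrefiltration Gs) {ω : Fin k → Bool} {g : H}
    (hg : g ∈ Gs (cubeWeight ω)) {c : (Fin k → Bool) → H}
    (hc : c ∈ HKGroup k fun i => Gs (i + 1)) :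
    cubeFace ω g * c * (cubeFace ω g)⁻¹ ∈ HKGroup k fun i => Gs (i + 1) := by
  refine HKGroup_le (K := (HKGroup k fun i => Gs (i + 1)).comap
    (MulAut.conj (cubeFace ω g)).toMonoidHom) (fun τ h hh => ?_) hc
  have hgh : ⁅g, h⁆ ∈ Gs (cubeWeight (ω ⊔ τ) + 1) :=
    hGs.antitone (by have := cubeWeight_sup_le ω τ; omega)
      (hGs.commutator_le _ _ (Subgroup.commutator_mem_commutator hg hh))
  have hconj : cubeFace ω g * cubeFace τ h * (cubeFace ω g)⁻¹ =
      cubeFace (ω ⊔ τ) ⁅g, h⁆ * cubeFace τ h := by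
    rw [← cubeFace_commutator, commutatorElement_def]
    group
  rw [Subgroup.mem_comap, MulEquiv.coe_toMonoidHom, MulAut.conj_apply, hconj]
  exact mul_mem (cubeFace_mem_HKGroup hgh) (cubeFace_mem_HKGroup hh)

theorem HKGroup_le_normalizer_shift (hGs : IsPrefiltration Gs) :
    HKGroup k Gs ≤ Subgroup.normalizer (HKGroup k fun i => Gs (i + 1) : Set _) := by
  refine HKGroup_le fun ω g hg => Subgroup.mem_normalizer_iff.2 fun c =>
    ⟨cubeFace_conj_mem_HKGroup_shift hGs hg, fun hc => ?_⟩
  have := cubeFace_conj_mem_HKGroup_shift hGs (inv_mem hg) hc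
  rwa [← cubeFace_inv, inv_inv, ← mul_assoc, inv_mul_cancel_left, inv_mul_cancel_right] at this

def cubeSlice (b : Bool) (c : (Fin (k + 1) → Bool) → H) : (Fin k → Bool) → H :=
  fun σ => c (Fin.cons b σ)

theorem cubeSlice_cubeFace_cons (b b' : Bool) (ω : Fin k → Bool) (g : H) :
    cubeSlice b' (cubeFace (Fin.cons b ω) g) = if b ≤ b' then cubeFace ω g else 1 := by
  funext σ
  by_cases hb : b ≤ b' <;> simp [cubeSlice, cubeFace, Fin.forall_fin_succ, hb]

theorem cubeSlice_cubeFace_mem {ω : Fin (k + 1) → Bool} {g : H} (hg : g ∈ Gs (cubeWeight ω)) :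
    cubeSlice false (cubeFace ω g) ∈ HKGroup k Gs ∧
      (cubeSlice false (cubeFace ω g))⁻¹ * cubeSlice true (cubeFace ω g) ∈
        HKGroup k fun i => Gs (i + 1) := by
  rw [← Fin.cons_self_tail ω] at hg ⊢
  generalize ω 0 = b, Fin.tail ω = ω' at hg ⊢
  rw [cubeWeight_cons] at hg
  cases b
  · rw [Bool.toNat_false, add_zero] at hg
    simp [cubeSlice_cubeFace_cons, Bool.le_iff_imp, cubeFace_mem_HKGroup hg]
  · rw [Bool.toNat_true] at hg
    simp [cubeSlice_cubeFace_cons, Bool.le_iff_imp,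
      cubeFace_mem_HKGroup (Gs := fun i => Gs (i + 1)) hg]

/-- The difference of the two slices is multiplicative only up to conjugation by lower slices,
hence the normalizer. -/
theorem cubeSlice_mem_HKGroup (hGs : IsPrefiltration Gs) {c : (Fin (k + 1) → Bool) → H}
    (hc : c ∈ HKGroup (k + 1) Gs) :
    cubeSlice false c ∈ HKGroup k Gs ∧
      (cubeSlice false c)⁻¹ * cubeSlice true c ∈ HKGroup k fun i => Gs (i + 1) := by
  refine HKGroup_induction (fun _ _ => cubeSlice_cubeFace_mem) ?one ?mul ?inv hc
  case one => exact ⟨one_mem _, mul_mem (inv_mem (one_mem _)) (one_mem _)⟩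
  case mul =>
    intro x y _ _ hx hy
    have hnorm := HKGroup_le_normalizer_shift hGs (inv_mem hy.1)
    have hdiff : (cubeSlice false (x * y))⁻¹ * cubeSlice true (x * y) =
        (cubeSlice false y)⁻¹ * ((cubeSlice false x)⁻¹ * cubeSlice true x) *
          (cubeSlice false y)⁻¹⁻¹ * ((cubeSlice false y)⁻¹ * cubeSlice true y) := by
      funext σ
      simp only [cubeSlice, Pi.mul_apply, Pi.inv_apply]
      group
    rw [hdiff]
    exact ⟨mul_mem hx.1 hy.1, mul_mem ((Subgroup.mem_normalizer_iff.1 hnorm _).1 hx.2) hy.2⟩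
  case inv =>
    intro x _ hx
    have hnorm := HKGroup_le_normalizer_shift hGs hx.1
    have hdiff : (cubeSlice false x⁻¹)⁻¹ * cubeSlice true x⁻¹ =
        cubeSlice false x * ((cubeSlice false x)⁻¹ * cubeSlice true x)⁻¹ *
          (cubeSlice false x)⁻¹ := by
      funext σ
      simp only [cubeSlice, Pi.mul_apply, Pi.inv_apply]
      group
    rw [hdiff]
    exact ⟨inv_mem hx.1, (Subgroup.mem_normalizer_iff.1 hnorm _).1 (inv_mem hx.2)⟩

theorem HKGroup_apply_top_mem (hGs : IsPrefiltration Gs) {Γ : Subgroup H} (hk : Gs k ≤ Γ)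
    {c : (Fin k → Bool) → H} (hc : c ∈ HKGroup k Gs) (hΓ : ∀ ω, ω ≠ ⊤ → c ω ∈ Γ) :
    c ⊤ ∈ Γ := by
  induction k generalizing Gs with
  | zero => exact hk (HKGroup_apply_mem hGs.antitone hc ⊤)
  | succ k ih =>
    obtain ⟨-, hdiff⟩ := cubeSlice_mem_HKGroup hGs hc
    have hlowΓ (σ : Fin k → Bool) : cubeSlice false c σ ∈ Γ :=
      hΓ _ fun h => by simpa using congrFun h 0
    have hdiffΓ (σ : Fin k → Bool) (hσ : σ ≠ ⊤) :
        ((cubeSlice false c)⁻¹ * cubeSlice true c) σ ∈ Γ :=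
      mul_mem (inv_mem (hlowΓ σ))
        (hΓ _ fun h => hσ (funext fun i => by simpa using congrFun h i.succ))
    have htop : (Fin.cons true ⊤ : Fin (k + 1) → Bool) = ⊤ :=
      Fin.cons_self_tail (⊤ : Fin (k + 1) → Bool)
    simpa [cubeSlice, htop] using mul_mem (hlowΓ ⊤) (ih hGs.shift hk hdiff hdiffΓ)

end HostKraCube

variable {E : Type*} [NormedAddCommGroup E] [NormedSpace ℝ E] [FiniteDimensional ℝ E]
  {G : Type*} [TopologicalSpace G] [ChartedSpace E G] [Group G] [IsTopologicalGroup G]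
  [LieGroup (modelWithCornersSelf ℝ E) (⊤ : ℕ∞) G] [Group.IsNilpotent G]

theorem statement8_general
    (d : ℕ) (Gs : ℕ → Subgroup G)
    (hanti : Antitone Gs)
    (hcomm : ∀ i j, ⁅Gs i, Gs j⁆ ≤ Gs (i + j))
    (hlen : Gs (d + 1) = ⊥)
    (Γ : Subgroup G)
    (c : (Fin (d + 1) → Bool) → G) (hc : c ∈ HKGroup (d + 1) Gs)
    (hΓ : ∀ ω : Fin (d + 1) → Bool, ω ≠ (fun _ => true) → c ω ∈ Γ) :
    c (fun _ => true) ∈ Γ :=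
  HKGroup_apply_top_mem ⟨hanti, hcomm⟩ (hlen ▸ bot_le) hc hΓ

/-- Let `G_•` be a `Γ`-rational filtration of length `d` as above. If
`(g_ω)_{ω ∈ {0,1}^{d+1}} ∈ HK^{d+1}(G_•)` satisfies `g_ω ∈ Γ` for every `ω ≠ 1^{d+1}`,
then also `g_{1^{d+1}} ∈ Γ`. -/
theorem statement8
    (d : ℕ) (Gs : ℕ → Subgroup G)
    (hanti : Antitone Gs) (hclosed : ∀ i, IsClosed (Gs i : Set G))
    (hcomm : ∀ i j, ⁅Gs i, Gs j⁆ ≤ Gs (i + j))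
    (hfil0 : Gs 0 = ⊤) (hfil1 : Gs 1 = ⊤) (hlen : Gs (d + 1) = ⊥)
    (Γ : Subgroup G) [DiscreteTopology Γ] (hcocompact : CompactSpace (G ⧸ Γ))
    (hrat : ∀ i, CompactSpace (↥(Gs i) ⧸ Γ.subgroupOf (Gs i)))
    (c : (Fin (d + 1) → Bool) → G) (hc : c ∈ HKGroup (d + 1) Gs)
    (hΓ : ∀ ω : Fin (d + 1) → Bool, ω ≠ (fun _ => true) → c ω ∈ Γ) :
    c (fun _ => true) ∈ Γ :=
  statement8_general d Gs hanti hcomm hlen Γ c hc hΓ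
end
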